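/- Let S ⊆ {0,1}^* be a set of binary strings such that |S ∩ {0,1}^n| ≤ 2^{0.99n} for all n. Then there exist a constant c and an infinite binary sequence α such that no factor of α of length greater than c belongs to S. -/

import Mathlib

/-!
Let `G L` count the words of length `L` over a `k`-letter alphabet none of whose factors of
length greater than `c` lies in `S`. Appending a letter to such a word either keeps this
property or creates a factor in `S` that must be a suffix `v`, the remaining prefix still
avoiding `S`; hence `k G L ≤ G (L + 1) + ∑ₙ G (L + 1 - n) |Sₙ|`. When `|Sₙ| ≤ γⁿ` with
`γ < β < k` and `c` is large, this recurrence forces `β G L ≤ G (L + 1)` (Miller's criterion),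
so such words exist in every length, and compactness of `ℕ → σ` turns them into one infinite
sequence.
-/

open Finset

variable {σ : Type*}

def AvoidsLongFactors (S : Set (List σ)) (c : ℕ) (w : List σ) : Prop :=
  ∀ v, v <:+: w → c < v.length → v ∉ S

namespace AvoidsLongFactors

variable {S : Set (List σ)} {c : ℕ} {u w : List σ}

theorem nil : AvoidsLongFactors S c [] := fun v hv hcv => by
  simp [List.eq_nil_of_infix_nil hv] at hcv

theorem of_infix (huw : u <:+: w) (hw : AvoidsLongFactors S c w) : AvoidsLongFactors S c u :=
  fun v hv => hw v (hv.trans huw)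

/-- A long factor of `w ++ [a]` lying in `S` is a suffix, and what precedes it is a prefix of
`w`. -/
theorem append_singleton (hw : AvoidsLongFactors S c w) (a : σ) :
    AvoidsLongFactors S c (w ++ [a]) ∨
      ∃ s v, s ++ v = w ++ [a] ∧ AvoidsLongFactors S c s ∧ v ∈ S ∧ c < v.length := by
  refine or_iff_not_imp_left.2 fun hbad => ?_
  obtain ⟨v, hv, hcv, hvS⟩ : ∃ v, v <:+: w ++ [a] ∧ c < v.length ∧ v ∈ S := by
    simpa [AvoidsLongFactors] using hbad
  rcases List.infix_concat_iff.1 hv with ⟨s, hsv⟩ | hvw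
  · refine ⟨s, v, hsv, hw.of_infix ?_, hvS, hcv⟩
    rcases List.prefix_concat_iff.1 ⟨v, hsv⟩ with rfl | hs
    · simp at hsv
      simp [hsv] at hcv
    · exact hs.isInfix
  · exact absurd hvS (hw v hvw hcv)

end AvoidsLongFactors

section Counting

variable [Fintype σ]

variable (σ) in
def wordsOfLength (n : ℕ) : Finset (List σ) :=
  (univ : Finset (Fin n → σ)).map ⟨List.ofFn, List.ofFn_injective⟩

theorem mem_wordsOfLength {n : ℕ} {w : List σ} : w ∈ wordsOfLength σ n ↔ w.length = n := by
  refine ⟨fun h => ?_, fun h => ?_⟩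
  · obtain ⟨f, -, rfl⟩ := mem_map.1 h
    exact List.length_ofFn
  · subst h
    exact mem_map.2 ⟨w.get, mem_univ _, List.ofFn_get w⟩

open Classical in
noncomputable def wordsOfLengthIn (S : Set (List σ)) (n : ℕ) : Finset (List σ) :=
  (wordsOfLength σ n).filter (· ∈ S)

open Classical in
noncomputable def avoidingWords (S : Set (List σ)) (c n : ℕ) : Finset (List σ) :=
  (wordsOfLength σ n).filter (AvoidsLongFactors S c)

variable {S : Set (List σ)} {c n : ℕ} {w : List σ}

theorem mem_wordsOfLengthIn : w ∈ wordsOfLengthIn S n ↔ w ∈ S ∧ w.length = n := by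
  classical
  simp [wordsOfLengthIn, mem_wordsOfLength, and_comm]

theorem coe_wordsOfLengthIn : (wordsOfLengthIn S n : Set (List σ)) = {x ∈ S | x.length = n} :=
  Set.ext fun _ => mem_wordsOfLengthIn

theorem mem_avoidingWords :
    w ∈ avoidingWords S c n ↔ w.length = n ∧ AvoidsLongFactors S c w := by
  classical
  simp [avoidingWords, mem_wordsOfLength]

theorem card_mul_card_avoidingWords_le (S : Set (List σ)) (c L : ℕ) :
    Fintype.card σ * #(avoidingWords S c L) ≤ #(avoidingWords S c (L + 1)) +
      ∑ n ∈ Icc (c + 1) (L + 1), #(avoidingWords S c (L + 1 - n)) * #(wordsOfLengthIn S n) := by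
  classical
  let extend : List σ × σ → List σ := fun p => p.1 ++ [p.2]
  have hinj : Set.InjOn extend ↑(avoidingWords S c L ×ˢ (univ : Finset σ)) := fun p _ q _ h => by
    obtain ⟨h₁, h₂⟩ := List.append_inj' h rfl
    exact Prod.ext h₁ (List.singleton_inj.1 h₂)
  have hsub : (avoidingWords S c L ×ˢ univ).image extend ⊆ avoidingWords S c (L + 1) ∪
      (Icc (c + 1) (L + 1)).biUnion fun n =>
        (avoidingWords S c (L + 1 - n) ×ˢ wordsOfLengthIn S n).image fun p => p.1 ++ p.2 := by
    intro x hx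
    obtain ⟨⟨w, a⟩, hp, rfl⟩ := mem_image.1 hx
    obtain ⟨hw, hwA⟩ : w.length = L ∧ AvoidsLongFactors S c w :=
      mem_avoidingWords.1 (mem_product.1 hp).1
    rcases hwA.append_singleton a with h | ⟨s, v, hsv, hs, hv, hcv⟩
    · exact mem_union_left _ (mem_avoidingWords.2 ⟨by simp [extend, hw], h⟩)
    · have hlen : s.length + v.length = w.length + 1 := by simpa using congrArg List.length hsv
      refine mem_union_right _ (mem_biUnion.2 ⟨v.length, mem_Icc.2 ⟨hcv, by omega⟩, ?_⟩)
      exact mem_image.2 ⟨(s, v), mem_product.2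
        ⟨mem_avoidingWords.2 ⟨by dsimp only; omega, hs⟩, mem_wordsOfLengthIn.2 ⟨hv, rfl⟩⟩, hsv⟩
  calc Fintype.card σ * #(avoidingWords S c L)
      = #((avoidingWords S c L ×ˢ univ).image extend) := by
        rw [card_image_of_injOn hinj, card_product, card_univ, mul_comm]
    _ ≤ _ := card_le_card hsub
    _ ≤ _ := card_union_le _ _
    _ ≤ _ := by
        gcongr
        exact card_biUnion_le.trans
          (sum_le_sum fun n _ => card_image_le.trans_eq (card_product _ _))

end Counting

theorem mul_le_succ_of_le_add_sum {F s : ℕ → ℝ} {k β : ℝ} {c : ℕ} (hF : ∀ n, 0 ≤ F n)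
    (hs : ∀ n, 0 ≤ s n) (hβ : 0 < β)
    (hrec : ∀ L, k * F L ≤ F (L + 1) + ∑ n ∈ Icc (c + 1) (L + 1), F (L + 1 - n) * s n)
    (htail : ∀ m, β * ∑ n ∈ Icc (c + 1) m, s n / β ^ n ≤ k - β) (L : ℕ) :
    β * F L ≤ F (L + 1) := by
  induction L using Nat.strong_induction_on with
  | _ L ih =>
  have hback : ∀ d ≤ L, β ^ d * F (L - d) ≤ F L := by
    intro d hd
    induction d with
    | zero => simp
    | succ d ihd =>
      calc β ^ (d + 1) * F (L - (d + 1)) = β ^ d * (β * F (L - (d + 1))) := by ring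
        _ ≤ β ^ d * F (L - (d + 1) + 1) := by gcongr; exact ih _ (by omega)
        _ = β ^ d * F (L - d) := by rw [show L - (d + 1) + 1 = L - d by omega]
        _ ≤ F L := ihd (by omega)
  have hterm : ∀ n ∈ Icc (c + 1) (L + 1), F (L + 1 - n) * s n ≤ β * F L * (s n / β ^ n) := by
    intro n hn
    have hn := mem_Icc.1 hn
    have hF' := hback (n - 1) (by omega)
    rw [show L - (n - 1) = L + 1 - n by omega] at hF'
    rw [mul_div_assoc', le_div_iff₀ (by positivity), show β ^ n = β * β ^ (n - 1) by
      rw [← pow_succ', Nat.sub_add_cancel (by omega)]]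
    calc F (L + 1 - n) * s n * (β * β ^ (n - 1)) = β * (β ^ (n - 1) * F (L + 1 - n)) * s n := by
          ring
      _ ≤ β * F L * s n := by gcongr; exact hs n
  have hsum := sum_le_sum hterm
  rw [← mul_sum] at hsum
  have := mul_le_mul_of_nonneg_left (htail (L + 1)) (hF L)
  linarith [hrec L]

theorem exists_forall_sum_Icc_div_pow_le {s : ℕ → ℝ} {γ β ε : ℝ} (hγ : 0 ≤ γ) (hγβ : γ < β)
    (hε : 0 < ε) (hs : ∀ n, s n ≤ γ ^ n) :
    ∃ c : ℕ, ∀ m, ∑ n ∈ Icc (c + 1) m, s n / β ^ n ≤ ε := by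
  have hβ : 0 < β := hγ.trans_lt hγβ
  set r := γ / β
  have hr0 : 0 ≤ r := div_nonneg hγ hβ.le
  have hr1 : r < 1 := (div_lt_one hβ).2 hγβ
  obtain ⟨c, hc⟩ := Filter.eventually_atTop.1 <|
    ((tendsto_pow_atTop_nhds_zero_of_lt_one hr0 hr1).div_const (1 - r)).eventually
      (gt_mem_nhds (by simpa using hε))
  refine ⟨c, fun m => ?_⟩
  calc ∑ n ∈ Icc (c + 1) m, s n / β ^ n ≤ ∑ n ∈ Ico (c + 1) (m + 1), r ^ n := by
        rw [Ico_add_one_right_eq_Icc]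
        exact sum_le_sum fun n _ => by
          rw [div_pow]
          exact div_le_div_of_nonneg_right (hs n) (by positivity)
    _ ≤ r ^ (c + 1) / (1 - r) := geom_sum_Ico_le_of_lt_one hr0 hr1
    _ ≤ ε := (hc (c + 1) (by omega)).le

theorem List.ofFn_getD_infix {w : List σ} {i n : ℕ} (d : σ) (h : i + n ≤ w.length) :
    (List.ofFn fun j : Fin n => w.getD (i + j) d) <:+: w := by
  have heq : (List.ofFn fun j : Fin n => w.getD (i + j) d) = (w.drop i).take n := by
    apply List.ext_getElem
    · simp
      omega
    · intro j hj _
      rw [List.length_ofFn] at hj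
      simp [List.getElem?_eq_getElem (by omega : i + j < w.length)]
  rw [heq]
  exact (List.take_prefix _ _).isInfix.trans (List.drop_suffix _ _).isInfix

/-- König's lemma, via compactness of `ℕ → σ` for the discrete topology on `σ`. -/
theorem exists_seq_avoiding_of_forall_exists [Finite σ] {S : Set (List σ)} {c : ℕ}
    (h : ∀ L, ∃ w : List σ, w.length = L ∧ AvoidsLongFactors S c w) :
    ∃ α : ℕ → σ, ∀ i n, c < n → (List.ofFn fun j : Fin n => α (i + j)) ∉ S := by
  let _ : TopologicalSpace σ := ⊥
  have : DiscreteTopology σ := ⟨rfl⟩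
  let C : ℕ → Set (ℕ → σ) := fun L =>
    ⋂ (i) (n) (_ : i + n ≤ L) (_ : c < n), {α | (List.ofFn fun j : Fin n => α (i + j)) ∉ S}
  have hanti : ∀ L, C (L + 1) ⊆ C L := fun L => by
    simp only [C, Set.subset_def, Set.mem_iInter]
    exact fun α hα i n hin => hα i n (by omega)
  have hclosed : ∀ L, IsClosed (C L) := fun L =>
    isClosed_iInter fun i => isClosed_iInter fun n => isClosed_iInter fun _ =>
      isClosed_iInter fun _ =>
        IsClosed.preimage (f := fun (α : ℕ → σ) (j : Fin n) => α (i + j))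
          (continuous_pi fun j => continuous_apply _)
          (isClosed_discrete {f : Fin n → σ | List.ofFn f ∉ S})
  have hne : ∀ L, (C L).Nonempty := fun L => by
    obtain ⟨w, hw, hwA⟩ := h (L + 1)
    refine ⟨fun k => w.getD k (w.head (by rintro rfl; simp at hw)), ?_⟩
    simp only [C, Set.mem_iInter]
    exact fun i n hin hcn => hwA _ (List.ofFn_getD_infix _ (by omega)) (by simpa using hcn)
  obtain ⟨α, hα⟩ := IsCompact.nonempty_iInter_of_sequence_nonempty_isCompact_isClosed C hanti hne
    (hclosed 0).isCompact hclosed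
  simp only [C, Set.mem_iInter] at hα
  exact ⟨α, fun i n hcn => hα (i + n) i n le_rfl hcn⟩

theorem exists_seq_avoiding_of_card_le_pow [Fintype σ] {S : Set (List σ)} {γ : ℝ} (hγ : 0 ≤ γ)
    (hγσ : γ < (Fintype.card σ : ℝ))
    (hS : ∀ n, (({x ∈ S | x.length = n} : Set (List σ)).ncard : ℝ) ≤ γ ^ n) :
    ∃ c : ℕ, ∃ α : ℕ → σ, ∀ i n, c < n → (List.ofFn fun j : Fin n => α (i + j)) ∉ S := by
  set k : ℝ := (Fintype.card σ : ℝ)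
  set β := (γ + k) / 2 with hβ_def
  have hγβ : γ < β := by linarith
  have hβ : 0 < β := hγ.trans_lt hγβ
  obtain ⟨c, hc⟩ := exists_forall_sum_Icc_div_pow_le (s := fun n => (#(wordsOfLengthIn S n) : ℝ))
    (ε := (k - β) / β) hγ hγβ (div_pos (by linarith) hβ) fun n => by
      simpa only [← coe_wordsOfLengthIn, Set.ncard_coe_finset] using hS n
  have hgrowth := mul_le_succ_of_le_add_sum (F := fun L => (#(avoidingWords S c L) : ℝ))
    (fun _ => Nat.cast_nonneg _) (fun _ => Nat.cast_nonneg _) hβ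
    (fun L => by simp only [k]; exact_mod_cast card_mul_card_avoidingWords_le S c L)
    fun m => (le_div_iff₀' hβ).1 (hc m)
  have hpos : ∀ L, (0 : ℝ) < #(avoidingWords S c L) := by
    intro L
    induction L with
    | zero => exact_mod_cast card_pos.2 ⟨[], mem_avoidingWords.2 ⟨rfl, .nil⟩⟩
    | succ L ih => exact (mul_pos hβ ih).trans_le (hgrowth L)
  refine ⟨c, exists_seq_avoiding_of_forall_exists fun L => ?_⟩
  obtain ⟨w, hw⟩ := card_pos.1 (by exact_mod_cast hpos L)
  exact ⟨w, mem_avoidingWords.1 hw⟩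

/-- **Levin's everywhere-complex sequences, combinatorial form.** If `S` is a set of
binary strings containing at most `2^{0.99 n}` strings of each length `n`, then there
are a constant `c` and an infinite binary sequence `α` none of whose factors of length
greater than `c` belongs to `S`. -/
theorem everywhere_complex_sequence (S : Set (List Bool))
    (hS : ∀ n : ℕ, (({x ∈ S | x.length = n} : Set (List Bool)).ncard : ℝ)
      ≤ (2 : ℝ) ^ ((0.99 : ℝ) * n)) :
    ∃ c : ℕ, ∃ α : ℕ → Bool, ∀ i n : ℕ, c < n →
      (List.ofFn fun j : Fin n => α (i + j)) ∉ S := by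
  have hγ : (2 : ℝ) ^ (0.99 : ℝ) < Fintype.card Bool := by
    rw [Fintype.card_bool, Nat.cast_ofNat]
    calc (2 : ℝ) ^ (0.99 : ℝ) < 2 ^ (1 : ℝ) :=
          Real.rpow_lt_rpow_of_exponent_lt one_lt_two (by norm_num)
      _ = 2 := Real.rpow_one 2
  exact exists_seq_avoiding_of_card_le_pow (by positivity) hγ fun n =>
    (hS n).trans_eq (Real.rpow_mul_natCast zero_le_two _ _)
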